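/- In the c-class GAMO setting, for each class i define the normalized probability densities ᾱ_i = α_i/P_c and β̄_i = β_i/((c−1)·P_c), and the mixture m_i = (1/c)·ᾱ_i + ((c−1)/c)·β̄_i. Then the optimal value of the GAMO objective over classifiers satisfies sup_M J(M) = Σ_{i=1}^c [ P_c·KL(ᾱ_i ‖ m_i) + (c−1)·P_c·KL(β̄_i ‖ m_i) ] + c·( P_c·log(1/c) + (c−1)·P_c·log((c−1)/c) ), where KL(p‖q) = ∫ p·log(p/q) dμ and the additive constant is independent of the generated densities (p_i^g). In particular, minimizing sup_M J(M) over the generated densities is equivalent to minimizing the sum over i of the weighted Jensen–Shannon divergences (1/c)·KL(ᾱ_i ‖ m_i) + ((c−1)/c)·KL(β̄_i ‖ m_i). -/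

import Mathlib

open MeasureTheory


lemma gibbs_pointwise (a b t : ℝ) (ha : 0 ≤ a) (hb : 0 ≤ b)
    (ht0 : 0 < t) (ht1 : t < 1) :
    a * Real.log t + b * Real.log (1 - t) ≤
      a * Real.log (a / (a + b)) + b * Real.log (b / (a + b)) := by
  rcases ha.eq_or_lt with ha0 | ha0
  · subst ha0
    rcases hb.eq_or_lt with hb0 | hb0
    · simp [← hb0]
    · simp only [zero_mul, zero_add, zero_div]
      rw [div_self (ne_of_gt hb0), Real.log_one, mul_zero]
      have : Real.log (1 - t) ≤ 0 := Real.log_nonpos (by linarith) (by linarith)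
      nlinarith
  rcases hb.eq_or_lt with hb0 | hb0
  · subst hb0
    simp only [zero_mul, add_zero, zero_div]
    rw [div_self (ne_of_gt ha0), Real.log_one, mul_zero]
    have : Real.log t ≤ 0 := Real.log_nonpos ht0.le (by linarith)
    nlinarith
  · have hab : 0 < a + b := by linarith
    have hu : 0 < t * ((a + b) / a) := by positivity
    have hv : 0 < (1 - t) * ((a + b) / b) := by
      have : 0 < 1 - t := by linarith
      positivity
    have h1 := Real.log_le_sub_one_of_pos hu
    have h2 := Real.log_le_sub_one_of_pos hv
    have e1 : Real.log (t * ((a + b) / a)) = Real.log t - Real.log (a / (a + b)) := by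
      rw [Real.log_mul (ne_of_gt ht0) (by positivity),
        Real.log_div (by positivity) (ne_of_gt ha0), Real.log_div (ne_of_gt ha0) (by positivity)]
      ring
    have e2 : Real.log ((1 - t) * ((a + b) / b)) =
        Real.log (1 - t) - Real.log (b / (a + b)) := by
      rw [Real.log_mul (by linarith) (by positivity),
        Real.log_div (by positivity) (ne_of_gt hb0), Real.log_div (ne_of_gt hb0) (by positivity)]
      ring
    have k1 : a * (Real.log t - Real.log (a / (a + b))) ≤ t * (a + b) - a := by
      calc a * (Real.log t - Real.log (a / (a + b)))
          = a * Real.log (t * ((a + b) / a)) := by rw [e1]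
        _ ≤ a * (t * ((a + b) / a) - 1) := mul_le_mul_of_nonneg_left h1 ha
        _ = t * (a + b) - a := by field_simp
    have k2 : b * (Real.log (1 - t) - Real.log (b / (a + b))) ≤ (1 - t) * (a + b) - b := by
      calc b * (Real.log (1 - t) - Real.log (b / (a + b)))
          = b * Real.log ((1 - t) * ((a + b) / b)) := by rw [e2]
        _ ≤ b * ((1 - t) * ((a + b) / b) - 1) := mul_le_mul_of_nonneg_left h2 hb
        _ = (1 - t) * (a + b) - b := by field_simp
    nlinarith

lemma log_convex_comb (s l : ℝ) (hs : 0 < s) (hl0 : 0 < l) (hl1 : l < 1) :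
    (1 - l) * Real.log s + l * Real.log (1 / 2) ≤ Real.log ((1 - l) * s + l * (1 / 2)) := by
  have h := (strictConcaveOn_log_Ioi.concaveOn).2 (Set.mem_Ioi.2 hs)
    (Set.mem_Ioi.2 (show (0:ℝ) < 1/2 by norm_num))
    (show (0:ℝ) ≤ 1 - l by linarith) (le_of_lt hl0)
    (show (1 - l) + l = 1 by ring)
  simpa [smul_eq_mul] using h
lemma per_term_lower (a s l : ℝ) (ha : 0 ≤ a) (hs : a = 0 ∨ 0 < s)
    (hl0 : 0 < l) (hl1 : l < 1) :
    (1 - l) * (a * Real.log s) + l * (a * Real.log (1 / 2)) ≤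
      a * Real.log ((1 - l) * s + l * (1 / 2)) := by
  rcases hs with hs | hs
  · simp [hs]
  · have h := log_convex_comb s l hs hl0 hl1
    have := mul_le_mul_of_nonneg_left h ha
    nlinarith [this]

lemma lower_pointwise (a b l : ℝ) (ha : 0 ≤ a) (hb : 0 ≤ b)
    (hl0 : 0 < l) (hl1 : l < 1) :
    (1 - l) * (a * Real.log (a / (a + b)) + b * Real.log (b / (a + b)))
      + l * ((a + b) * Real.log (1 / 2))
    ≤ a * Real.log ((1 - l) * (a / (a + b)) + l * (1 / 2))
      + b * Real.log ((1 - l) * (b / (a + b)) + l * (1 / 2)) := by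
  have h1 : (1 - l) * (a * Real.log (a / (a + b))) + l * (a * Real.log (1 / 2)) ≤
      a * Real.log ((1 - l) * (a / (a + b)) + l * (1 / 2)) := by
    apply per_term_lower _ _ _ ha _ hl0 hl1
    rcases ha.eq_or_lt with h | h
    · exact Or.inl h.symm
    · right; have : 0 < a + b := by linarith
      positivity
  have h2 : (1 - l) * (b * Real.log (b / (a + b))) + l * (b * Real.log (1 / 2)) ≤
      b * Real.log ((1 - l) * (b / (a + b)) + l * (1 / 2)) := by
    apply per_term_lower _ _ _ hb _ hl0 hl1
    rcases hb.eq_or_lt with h | h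
    · exact Or.inl h.symm
    · right; have : 0 < a + b := by linarith
      positivity
  nlinarith [h1, h2]

set_option maxHeartbeats 1000000 in
/-- Theorem 1 of the paper (Jensen–Shannon reformulation of the GAMO minimax game).
In the `c`-class GAMO setting, with normalized densities `ᾱ i = α i / P c`,
`β̄ i = β i / ((c-1)·P c)` and mixtures `m i = (1/c)·ᾱ i + ((c-1)/c)·β̄ i`, the optimal
value `S = sup_M J(M)` of the GAMO objective
`J(M) = ∑ i (∫ α i · log (M i) dμ + ∫ β i · log (1 - M i) dμ)` over measurable
classifiers `M : X → (0,1)^c` (assumed finite; the supremum is taken over classifiers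
whose objective integrands are integrable — any other classifier has `J(M) = -∞`)
satisfies
`S = ∑ i (P c · KL(ᾱ i ‖ m i) + (c-1)·P c · KL(β̄ i ‖ m i))
      + c·(P c · log (1/c) + (c-1)·P c · log ((c-1)/c))`,
where `KL(p‖q) = ∫ p·log (p/q) dμ`, all KL integrals being assumed well-defined
(integrable).  The additive constant is independent of the generated densities `pg`. -/
theorem gamo_js_reformulation (X : Type*) [MeasurableSpace X]
    (μ : Measure X) [SigmaFinite μ]
    (c : ℕ) (hc : 2 ≤ c)
    (P : Fin c → ℝ) (hP_pos : ∀ i, 0 < P i)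
    (hP_mono : ∀ i j : Fin c, i ≤ j → P i ≤ P j)
    (hP_sum : ∑ i, P i = 1)
    (pd pg : Fin c → X → ℝ)
    (hpd_meas : ∀ i, Measurable (pd i)) (hpg_meas : ∀ i, Measurable (pg i))
    (hpd_nonneg : ∀ i x, 0 ≤ pd i x) (hpg_nonneg : ∀ i x, 0 ≤ pg i x)
    (hpd_int : ∀ i, ∫ x, pd i x ∂μ = 1) (hpg_int : ∀ i, ∫ x, pg i x ∂μ = 1)
    (Pc : ℝ) (hPc : Pc = P ⟨c - 1, by omega⟩)
    (α β : Fin c → X → ℝ)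
    (hα : ∀ i x, α i x = P i * pd i x + (Pc - P i) * pg i x)
    (hβ : ∀ i x, β i x = ∑ j ∈ Finset.univ.erase i, α j x)
    (αbar βbar m : Fin c → X → ℝ)
    (hαbar : ∀ i x, αbar i x = α i x / Pc)
    (hβbar : ∀ i x, βbar i x = β i x / (((c : ℝ) - 1) * Pc))
    (hm : ∀ i x, m i x = (1 / (c : ℝ)) * αbar i x + (((c : ℝ) - 1) / (c : ℝ)) * βbar i x)
    (hKLα_int : ∀ i, Integrable (fun x => αbar i x * Real.log (αbar i x / m i x)) μ)
    (hKLβ_int : ∀ i, Integrable (fun x => βbar i x * Real.log (βbar i x / m i x)) μ)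
    (S : ℝ)
    (hS : IsLUB {r : ℝ | ∃ M : X → Fin c → ℝ, Measurable M ∧
      (∀ x i, M x i ∈ Set.Ioo (0 : ℝ) 1) ∧
      (∀ i, Integrable (fun x => α i x * Real.log (M x i)) μ) ∧
      (∀ i, Integrable (fun x => β i x * Real.log (1 - M x i)) μ) ∧
      r = ∑ i, ((∫ x, α i x * Real.log (M x i) ∂μ) +
        ∫ x, β i x * Real.log (1 - M x i) ∂μ)} S) :
    S = (∑ i, (Pc * ∫ x, αbar i x * Real.log (αbar i x / m i x) ∂μ +
          ((c : ℝ) - 1) * Pc * ∫ x, βbar i x * Real.log (βbar i x / m i x) ∂μ)) +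
      (c : ℝ) * (Pc * Real.log (1 / (c : ℝ)) +
        ((c : ℝ) - 1) * Pc * Real.log (((c : ℝ) - 1) / (c : ℝ))) := by
  have hcR : (2:ℝ) ≤ (c:ℝ) := by exact_mod_cast hc
  have hc1 : (0:ℝ) < (c:ℝ) - 1 := by linarith
  have hc0 : (0:ℝ) < (c:ℝ) := by linarith
  have hPc_pos : 0 < Pc := hPc ▸ hP_pos _
  have hPiPc : ∀ i, P i ≤ Pc := by
    intro i
    rw [hPc]
    refine hP_mono i ⟨c - 1, by omega⟩ ?_
    have := i.isLt
    exact Fin.mk_le_mk.mpr (by omega) |>.trans_eq rfl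
  set T : X → ℝ := fun x => ∑ j, α j x with hTdef
  have hβT : ∀ i x, β i x = T x - α i x := by
    intro i x
    rw [hβ, hTdef]
    exact Finset.sum_erase_eq_sub (Finset.mem_univ i)
  have hα_nonneg : ∀ i x, 0 ≤ α i x := by
    intro i x
    rw [hα]
    have h1 := hPiPc i
    have h2 := (hP_pos i).le
    have h3 := hpd_nonneg i x
    have h4 := hpg_nonneg i x
    have : 0 ≤ Pc - P i := by linarith
    exact add_nonneg (mul_nonneg h2 h3) (mul_nonneg this h4)
  have hT_nonneg : ∀ x, 0 ≤ T x := fun x =>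
    Finset.sum_nonneg fun j _ => hα_nonneg j x
  have hαT : ∀ i x, α i x ≤ T x :=
    fun i x => Finset.single_le_sum (fun j _ => hα_nonneg j x) (Finset.mem_univ i)
  have hβ_nonneg : ∀ i x, 0 ≤ β i x := by
    intro i x
    rw [hβT]
    linarith [hαT i x]
  have hα_meas : ∀ i, Measurable (α i) := by
    intro i
    have h : α i = fun x => P i * pd i x + (Pc - P i) * pg i x := funext (hα i)
    rw [h]
    exact ((hpd_meas i).const_mul _).add ((hpg_meas i).const_mul _)
  have hT_meas : Measurable T :=
    Finset.measurable_sum _ fun j _ => hα_meas j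
  have hpd_itg : ∀ i, Integrable (pd i) μ := by
    intro i
    by_contra h
    have h2 := hpd_int i
    rw [integral_undef h] at h2
    exact one_ne_zero h2.symm
  have hpg_itg : ∀ i, Integrable (pg i) μ := by
    intro i
    by_contra h
    have h2 := hpg_int i
    rw [integral_undef h] at h2
    exact one_ne_zero h2.symm
  have hα_itg : ∀ i, Integrable (α i) μ := by
    intro i
    have h : α i = fun x => P i * pd i x + (Pc - P i) * pg i x := funext (hα i)
    rw [h]
    exact ((hpd_itg i).const_mul _).add ((hpg_itg i).const_mul _)
  have hα_integral : ∀ i, ∫ x, α i x ∂μ = Pc := by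
    intro i
    have h : α i = fun x => P i * pd i x + (Pc - P i) * pg i x := funext (hα i)
    rw [h, integral_add ((hpd_itg i).const_mul _) ((hpg_itg i).const_mul _),
      integral_const_mul, integral_const_mul, hpd_int, hpg_int]
    ring
  have hT_itg : Integrable T μ := integrable_finset_sum _ fun j _ => hα_itg j
  have hT_integral : ∫ x, T x ∂μ = (c : ℝ) * Pc := by
    rw [hTdef, integral_finset_sum _ fun j _ => hα_itg j]
    simp [hα_integral]
  have hβ_itg : ∀ i, Integrable (β i) μ := by
    intro i
    have h : β i = fun x => T x - α i x := funext (hβT i)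
    rw [h]
    exact hT_itg.sub (hα_itg i)
  have hβ_meas : ∀ i, Measurable (β i) := by
    intro i
    have h : β i = fun x => T x - α i x := funext (hβT i)
    rw [h]
    exact hT_meas.sub (hα_meas i)
  have hβ_integral : ∀ i, ∫ x, β i x ∂μ = ((c : ℝ) - 1) * Pc := by
    intro i
    have h : β i = fun x => T x - α i x := funext (hβT i)
    rw [h, integral_sub hT_itg (hα_itg i), hT_integral, hα_integral]
    ring
  have hm' : ∀ i x, m i x = T x / ((c : ℝ) * Pc) := by
    intro i x
    rw [hm, hαbar, hβbar, hβT]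
    field_simp
    ring
  have hIα : ∀ i x, α i x * Real.log (α i x / T x)
      = Pc * (αbar i x * Real.log (αbar i x / m i x)) - Real.log c * α i x := by
    intro i x
    by_cases h0 : α i x = 0
    · rw [h0, hαbar, h0]
      simp
    · have hαpos : 0 < α i x := (hα_nonneg i x).lt_of_ne (Ne.symm h0)
      have hTpos : 0 < T x := lt_of_lt_of_le hαpos (hαT i x)
      have hratio : αbar i x / m i x = (c : ℝ) * (α i x / T x) := by
        rw [hαbar, hm' i x]
        field_simp
      rw [hratio, Real.log_mul (ne_of_gt hc0) (by positivity), hαbar]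
      field_simp
      ring
  have hIβ : ∀ i x, β i x * Real.log (β i x / T x)
      = ((c : ℝ) - 1) * Pc * (βbar i x * Real.log (βbar i x / m i x))
        - Real.log ((c : ℝ) / ((c : ℝ) - 1)) * β i x := by
    intro i x
    by_cases h0 : β i x = 0
    · rw [h0, hβbar, h0]
      simp
    · have hβpos : 0 < β i x := (hβ_nonneg i x).lt_of_ne (Ne.symm h0)
      have hTpos : 0 < T x := by
        have := hα_nonneg i x
        have := hβT i x
        linarith
      have hratio : βbar i x / m i x = ((c : ℝ) / ((c : ℝ) - 1)) * (β i x / T x) := by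
        rw [hβbar, hm' i x]
        field_simp
      rw [hratio, Real.log_mul (by positivity) (by positivity), hβbar]
      field_simp
      ring
  -- the pointwise optimal objective
  have hf_eq : ∀ i, (fun x => α i x * Real.log (α i x / T x)
        + β i x * Real.log (β i x / T x))
      = fun x => (Pc * (αbar i x * Real.log (αbar i x / m i x)) - Real.log c * α i x)
        + (((c : ℝ) - 1) * Pc * (βbar i x * Real.log (βbar i x / m i x))
          - Real.log ((c : ℝ) / ((c : ℝ) - 1)) * β i x) := by
    intro i
    funext x
    rw [hIα i x, hIβ i x]
  have hf_itg : ∀ i, Integrable (fun x => α i x * Real.log (α i x / T x)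
      + β i x * Real.log (β i x / T x)) μ := by
    intro i
    rw [hf_eq i]
    exact (((hKLα_int i).const_mul Pc).sub ((hα_itg i).const_mul _)).add
      (((hKLβ_int i).const_mul _).sub ((hβ_itg i).const_mul _))
  have hf_integral : ∀ i, ∫ x, (α i x * Real.log (α i x / T x)
        + β i x * Real.log (β i x / T x)) ∂μ
      = (Pc * ∫ x, αbar i x * Real.log (αbar i x / m i x) ∂μ
        + ((c : ℝ) - 1) * Pc * ∫ x, βbar i x * Real.log (βbar i x / m i x) ∂μ)
        - (Pc * Real.log c + ((c : ℝ) - 1) * Pc * Real.log ((c : ℝ) / ((c : ℝ) - 1))) := by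
    intro i
    have I1 : Integrable (fun x => Pc * (αbar i x * Real.log (αbar i x / m i x))
        - Real.log c * α i x) μ :=
      ((hKLα_int i).const_mul Pc).sub ((hα_itg i).const_mul _)
    have I2 : Integrable (fun x => ((c : ℝ) - 1) * Pc * (βbar i x * Real.log (βbar i x / m i x))
        - Real.log ((c : ℝ) / ((c : ℝ) - 1)) * β i x) μ :=
      ((hKLβ_int i).const_mul _).sub ((hβ_itg i).const_mul _)
    rw [hf_eq i, integral_add I1 I2,
      integral_sub ((hKLα_int i).const_mul Pc) ((hα_itg i).const_mul _),
      integral_sub ((hKLβ_int i).const_mul _) ((hβ_itg i).const_mul _),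
      integral_const_mul, integral_const_mul, integral_const_mul, integral_const_mul,
      hα_integral, hβ_integral]
    ring
  set V : ℝ := ∑ i, ∫ x, (α i x * Real.log (α i x / T x)
      + β i x * Real.log (β i x / T x)) ∂μ with hVdef
  clear_value V
  -- upper bound : S ≤ V
  have hS_le : S ≤ V := by
    apply hS.2
    rintro r ⟨M, hM_meas, hM_mem, hint1, hint2, rfl⟩
    rw [hVdef]
    apply Finset.sum_le_sum
    intro i _
    rw [← integral_add (hint1 i) (hint2 i)]
    apply integral_mono ((hint1 i).add (hint2 i)) (hf_itg i)
    intro x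
    have hTx : α i x + β i x = T x := by rw [hβT]; ring
    have h := gibbs_pointwise (α i x) (β i x) (M x i) (hα_nonneg i x) (hβ_nonneg i x)
      (hM_mem x i).1 (hM_mem x i).2
    rw [hTx] at h
    exact h
  -- lower bound : V ≤ S
  have hV_le : V ≤ S := by
    have key : ∀ l : ℝ, 0 < l → l < 1 →
        (1 - l) * V + l * ((c : ℝ) * ((c : ℝ) * Pc * Real.log (1 / 2))) ≤ S := by
      intro l hl0 hl1
      set M : X → Fin c → ℝ := fun x i => (1 - l) * (α i x / T x) + l * (1 / 2) with hMdef
      have hM_meas : Measurable M := by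
        apply measurable_pi_lambda
        intro i
        exact (((hα_meas i).div hT_meas).const_mul _).add_const _
      have hs01 : ∀ i x, 0 ≤ α i x / T x ∧ α i x / T x ≤ 1 := by
        intro i x
        rcases (hT_nonneg x).eq_or_lt with h | h
        · rw [← h]
          simp
        · exact ⟨div_nonneg (hα_nonneg i x) (hT_nonneg x), by rw [div_le_one h]; exact hαT i x⟩
      have hMl : ∀ x i, l / 2 ≤ M x i := by
        intro x i
        obtain ⟨h1, _⟩ := hs01 i x
        have : 0 ≤ (1 - l) * (α i x / T x) := by nlinarith
        simp only [hMdef]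
        nlinarith
      have hMu : ∀ x i, M x i ≤ 1 - l / 2 := by
        intro x i
        obtain ⟨h1, h2⟩ := hs01 i x
        have : (1 - l) * (α i x / T x) ≤ 1 - l := by nlinarith
        simp only [hMdef]
        nlinarith
      have hM_mem : ∀ x i, M x i ∈ Set.Ioo (0 : ℝ) 1 := by
        intro x i
        have h1 := hMl x i
        have h2 := hMu x i
        exact Set.mem_Ioo.mpr ⟨lt_of_lt_of_le (by linarith : (0:ℝ) < l / 2) h1,
          lt_of_le_of_lt h2 (by linarith : 1 - l / 2 < 1)⟩
      have hlog_bound : ∀ t : ℝ, l / 2 ≤ t → t ≤ 1 - l / 2 → |Real.log t| ≤ |Real.log (l / 2)| := by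
        intro t h1 h2
        have hl2 : 0 < l / 2 := by linarith
        have hlt : Real.log (l / 2) ≤ Real.log t := Real.log_le_log hl2 h1
        have ht0 : Real.log t ≤ 0 := Real.log_nonpos (by linarith) (by linarith)
        have hneg : Real.log (l / 2) ≤ 0 := Real.log_nonpos (le_of_lt hl2) (by linarith)
        rw [abs_of_nonpos ht0, abs_of_nonpos hneg]
        linarith
      have hint1 : ∀ i, Integrable (fun x => α i x * Real.log (M x i)) μ := by
        intro i
        apply Integrable.mono ((hα_itg i).const_mul |Real.log (l / 2)|)
        · exact ((hα_meas i).mul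
            ((((hα_meas i).div hT_meas).const_mul _).add_const _).log).aestronglyMeasurable
        · filter_upwards with x
          simp only [Real.norm_eq_abs, abs_mul, abs_abs, abs_of_nonneg (hα_nonneg i x)]
          rw [mul_comm (|Real.log (l / 2)|) (α i x)]
          exact mul_le_mul_of_nonneg_left (hlog_bound (M x i) (hMl x i) (hMu x i))
            (hα_nonneg i x)
      have hint2 : ∀ i, Integrable (fun x => β i x * Real.log (1 - M x i)) μ := by
        intro i
        apply Integrable.mono ((hβ_itg i).const_mul |Real.log (l / 2)|)
        · exact ((hβ_meas i).mul
            (((((hα_meas i).div hT_meas).const_mul _).add_const _).const_sub _).log).aestronglyMeasurable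
        · filter_upwards with x
          simp only [Real.norm_eq_abs, abs_mul, abs_abs, abs_of_nonneg (hβ_nonneg i x)]
          rw [mul_comm (|Real.log (l / 2)|) (β i x)]
          refine mul_le_mul_of_nonneg_left (hlog_bound (1 - M x i) ?_ ?_) (hβ_nonneg i x)
          · have := hMu x i; linarith
          · have := hMl x i; linarith
      have hlow : ∀ i x, (1 - l) * (α i x * Real.log (α i x / T x)
            + β i x * Real.log (β i x / T x)) + l * (T x * Real.log (1 / 2))
          ≤ α i x * Real.log (M x i) + β i x * Real.log (1 - M x i) := by
        intro i x
        rcases (hT_nonneg x).eq_or_lt with h | h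
        · have hα0 : α i x = 0 := le_antisymm ((hαT i x).trans_eq h.symm) (hα_nonneg i x)
          have hβ0 : β i x = 0 := by rw [hβT, ← h, hα0]; ring
          rw [hα0, hβ0, ← h]
          simp
        · have h1M : 1 - M x i = (1 - l) * (β i x / T x) + l * (1 / 2) := by
            simp only [hMdef]
            rw [hβT]
            field_simp
            ring
          have hab : α i x + β i x = T x := by rw [hβT]; ring
          have hlp := lower_pointwise (α i x) (β i x) l (hα_nonneg i x) (hβ_nonneg i x) hl0 hl1
          rw [hab] at hlp
          rw [h1M]
          simp only [hMdef]
          exact hlp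
      have hlow_itg : ∀ i, Integrable (fun x =>
          (1 - l) * (α i x * Real.log (α i x / T x) + β i x * Real.log (β i x / T x))
            + l * (T x * Real.log (1 / 2))) μ :=
        fun i => ((hf_itg i).const_mul _).add ((hT_itg.mul_const _).const_mul _)
      have hstep : ∀ i, (1 - l) * (∫ x, (α i x * Real.log (α i x / T x)
            + β i x * Real.log (β i x / T x)) ∂μ) + l * ((c : ℝ) * Pc * Real.log (1 / 2))
          ≤ ∫ x, α i x * Real.log (M x i) ∂μ + ∫ x, β i x * Real.log (1 - M x i) ∂μ := by
        intro i
        rw [← integral_add (hint1 i) (hint2 i)]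
        have hmono := integral_mono (hlow_itg i) ((hint1 i).add (hint2 i)) (fun x => hlow i x)
        have hcomp : ∫ x, ((1 - l) * (α i x * Real.log (α i x / T x)
              + β i x * Real.log (β i x / T x)) + l * (T x * Real.log (1 / 2))) ∂μ
            = (1 - l) * (∫ x, (α i x * Real.log (α i x / T x)
              + β i x * Real.log (β i x / T x)) ∂μ) + l * ((c : ℝ) * Pc * Real.log (1 / 2)) := by
          rw [integral_add ((hf_itg i).const_mul _) ((hT_itg.mul_const _).const_mul _),
            integral_const_mul, integral_const_mul, integral_mul_const, hT_integral]
        rw [hcomp] at hmono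
        exact hmono
      calc (1 - l) * V + l * ((c : ℝ) * ((c : ℝ) * Pc * Real.log (1 / 2)))
          = ∑ i, ((1 - l) * (∫ x, (α i x * Real.log (α i x / T x)
              + β i x * Real.log (β i x / T x)) ∂μ) + l * ((c : ℝ) * Pc * Real.log (1 / 2))) := by
            rw [Finset.sum_add_distrib, ← Finset.mul_sum, ← hVdef, Finset.sum_const,
              Finset.card_univ, Fintype.card_fin, nsmul_eq_mul]
            ring
        _ ≤ ∑ i, ((∫ x, α i x * Real.log (M x i) ∂μ)
              + ∫ x, β i x * Real.log (1 - M x i) ∂μ) :=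
            Finset.sum_le_sum fun i _ => hstep i
        _ ≤ S := hS.1 ⟨M, hM_meas, hM_mem, hint1, hint2, rfl⟩
    have htend : Filter.Tendsto
        (fun l : ℝ => (1 - l) * V + l * ((c : ℝ) * ((c : ℝ) * Pc * Real.log (1 / 2))))
        (nhdsWithin 0 (Set.Ioi 0)) (nhds V) := by
      have hcont : Continuous
          (fun l : ℝ => (1 - l) * V + l * ((c : ℝ) * ((c : ℝ) * Pc * Real.log (1 / 2)))) :=
        ((continuous_const.sub continuous_id).mul continuous_const).add
          (continuous_id.mul continuous_const)
      have h0 := hcont.tendsto 0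
      have : (1 - (0:ℝ)) * V + 0 * ((c : ℝ) * ((c : ℝ) * Pc * Real.log (1 / 2))) = V := by ring
      rw [this] at h0
      exact h0.mono_left nhdsWithin_le_nhds
    refine le_of_tendsto htend ?_
    filter_upwards [Ioo_mem_nhdsGT_of_mem (Set.left_mem_Ico.mpr one_pos)] with l hl
    exact key l hl.1 hl.2
  -- conclusion
  have hSV : S = V := le_antisymm hS_le hV_le
  rw [hSV, hVdef]
  rw [Finset.sum_congr rfl fun i _ => hf_integral i]
  rw [Finset.sum_sub_distrib, Finset.sum_const, Finset.card_univ, Fintype.card_fin,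
    nsmul_eq_mul]
  have l1 : Real.log (1 / (c : ℝ)) = -Real.log c := by rw [one_div, Real.log_inv]
  have l2 : Real.log (((c : ℝ) - 1) / (c : ℝ)) = -Real.log ((c : ℝ) / ((c : ℝ) - 1)) := by
    rw [Real.log_div (ne_of_gt hc1) (ne_of_gt hc0), Real.log_div (ne_of_gt hc0) (ne_of_gt hc1)]
    ring
  rw [l1, l2]
  ring
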